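/- arXiv:2202.12999 — 3 statements merged into one kernel-verified Lean document; each statement's English description precedes it below -/
import Mathlib

section
/- Fix $0<\nu\leq\Lambda<\infty$, $1<p\leq q$, $\mu\in[0,1]$, $\varepsilon,T\in(0,1]$. Let $g_1(s)=\nu(\mu^2+s^2)^{(p-2)/2}$, $g_{2,\varepsilon}(s)=\Lambda(\mu^2+s^2)^{(p-2)/2}+\Lambda(\mu^2+s^2)^{(q-2)/2}+\varepsilon\Lambda(1+s^2)^{\min\{p-2,0\}/2}$, and $G_T(t)=\frac{\nu}{p}(\mu^2+t^2)^{p/2}-\frac{\nu}{p}(\mu^2+T^2)^{p/2}$ for $t\geq T$. Then there exists $c_1=c_1(\nu,\Lambda,p,q)\geq 1$ such that for all $t\geq T$: $\frac{g_{2,\varepsilon}(t)}{g_1(t)}\leq c_1\big(G_T(t)^{(q-p)/p}+1+\frac{\varepsilon}{(\mu^2+T^2)^{(p-2)/2}}\big)$. -/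
/-!
Dividing by `g₁` leaves `Λ/ν` times `1 + (μ²+t²)^((q-p)/2) + ε (1+t²)^(min(p-2,0)/2) / (μ²+t²)^((p-2)/2)`.
The middle term is `((μ²+t²)^(p/2))^((q-p)/p)`, and `(μ²+t²)^(p/2) = (p/ν) G_T(t) + (μ²+T²)^(p/2)`
with `μ² + T² ≤ 2`, so the subadditivity `(x+y)^r ≤ 2^r (x^r + y^r)` bounds it by a multiple of
`G_T(t)^((q-p)/p) + 1`. The last quotient is at most `1` when `p ≤ 2` (as `μ² + t² ≤ 1 + t²`) and
at most `(μ²+T²)^(-(p-2)/2)` when `p ≥ 2` (as `μ² + T² ≤ μ² + t²`).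
-/

open Real

lemma add_rpow_le_two_rpow_mul_add {x y r : ℝ} (hx : 0 ≤ x) (hy : 0 ≤ y) (hr : 0 ≤ r) :
    (x + y) ^ r ≤ 2 ^ r * (x ^ r + y ^ r) := by
  have hmax : max x y ^ r ≤ x ^ r + y ^ r := by
    rcases max_cases x y with ⟨h, -⟩ | ⟨h, -⟩ <;> rw [h]
    · exact le_add_of_nonneg_right (rpow_nonneg hy r)
    · exact le_add_of_nonneg_left (rpow_nonneg hx r)
  calc (x + y) ^ r ≤ (2 * max x y) ^ r := by
        gcongr
        linarith [le_max_left x y, le_max_right x y]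
    _ = 2 ^ r * max x y ^ r := mul_rpow zero_le_two (hx.trans (le_max_left x y))
    _ ≤ 2 ^ r * (x ^ r + y ^ r) := by gcongr

lemma rpow_le_two_rpow_mul_sub {X Y c r : ℝ} (hY : 0 ≤ Y) (hYX : Y ≤ X) (hc : 0 < c)
    (hr : 0 ≤ r) :
    X ^ r ≤ 2 ^ r * (c⁻¹ ^ r * (c * X - c * Y) ^ r + Y ^ r) := by
  have hinc : 0 ≤ c * X - c * Y := by nlinarith
  calc X ^ r = (c⁻¹ * (c * X - c * Y) + Y) ^ r := by field_simp; ring_nf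
    _ ≤ 2 ^ r * ((c⁻¹ * (c * X - c * Y)) ^ r + Y ^ r) :=
        add_rpow_le_two_rpow_mul_add (by positivity) hY hr
    _ = 2 ^ r * (c⁻¹ ^ r * (c * X - c * Y) ^ r + Y ^ r) := by
        rw [mul_rpow (by positivity) hinc]

lemma rpow_min_div_rpow_le {A B s : ℝ} (hB : 0 < B) (hBA : B ≤ A) (hAs : A ≤ s) (a : ℝ) :
    s ^ (min a 0 / 2) / A ^ (a / 2) ≤ 1 + (B ^ (a / 2))⁻¹ := by
  have hA : 0 < A := hB.trans_le hBA
  rcases le_total a 0 with ha | ha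
  · rw [min_eq_left ha]
    have : s ^ (a / 2) ≤ A ^ (a / 2) := rpow_le_rpow_of_nonpos hA hAs (by linarith)
    have : s ^ (a / 2) / A ^ (a / 2) ≤ 1 := (div_le_one (by positivity)).mpr this
    linarith [inv_nonneg.mpr (rpow_nonneg hB.le (a / 2))]
  · rw [min_eq_right ha, zero_div, rpow_zero, one_div]
    have : (A ^ (a / 2))⁻¹ ≤ (B ^ (a / 2))⁻¹ := by gcongr
    linarith

lemma rpow_sub_div_two_le_increment {ν p q A B : ℝ} (hν : 0 < ν) (hp : 0 < p) (hpq : p ≤ q)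
    (hB : 0 < B) (hBA : B ≤ A) (hB2 : B ≤ 2) :
    A ^ ((q - p) / 2) ≤ 2 ^ ((q - p) / p) * (p / ν) ^ ((q - p) / p) *
        (ν / p * A ^ (p / 2) - ν / p * B ^ (p / 2)) ^ ((q - p) / p) +
      2 ^ ((q - p) / p) * 2 ^ ((q - p) / 2) := by
  have hr : 0 ≤ (q - p) / p := div_nonneg (by linarith) hp.le
  have hpow (D : ℝ) (hD : 0 ≤ D) : (D ^ (p / 2)) ^ ((q - p) / p) = D ^ ((q - p) / 2) := by
    rw [← rpow_mul hD]; field_simp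
  have hY : B ^ ((q - p) / 2) ≤ 2 ^ ((q - p) / 2) := by gcongr
  have key := rpow_le_two_rpow_mul_sub (rpow_nonneg hB.le (p / 2))
    (rpow_le_rpow hB.le hBA (by positivity)) (div_pos hν hp) hr
  rw [hpow A (hB.le.trans hBA), hpow B hB.le, inv_div] at key
  nlinarith [rpow_nonneg (zero_le_two (α := ℝ)) ((q - p) / p)]

lemma ellipticity_ratio_eq {ν Λ p q ε A C : ℝ} (hν : 0 < ν) (hA : 0 < A) :
    (Λ * A ^ ((p - 2) / 2) + Λ * A ^ ((q - 2) / 2) + ε * Λ * C) / (ν * A ^ ((p - 2) / 2)) =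
      Λ / ν * (1 + A ^ ((q - p) / 2) + ε * (C / A ^ ((p - 2) / 2))) := by
  rw [show (q - 2) / 2 = (q - p) / 2 + (p - 2) / 2 by ring, rpow_add hA]
  field_simp

/-- Bound on the ellipticity ratio `g_{2,ε}/g_1` in terms of `G_T`. -/
theorem ellipticity_ratio_bound (ν Λ p q : ℝ) (hν : 0 < ν) (hνΛ : ν ≤ Λ)
    (hp : 1 < p) (hpq : p ≤ q) :
    ∃ c₁ : ℝ, 1 ≤ c₁ ∧ ∀ μ ε T : ℝ, 0 ≤ μ → μ ≤ 1 → 0 < ε → ε ≤ 1 → 0 < T → T ≤ 1 →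
      ∀ t ≥ T,
        (Λ * (μ^2 + t^2) ^ ((p-2)/2) + Λ * (μ^2 + t^2) ^ ((q-2)/2) +
            ε * Λ * (1 + t^2) ^ (min (p-2) 0 / 2)) / (ν * (μ^2 + t^2) ^ ((p-2)/2)) ≤
          c₁ * ((ν/p * (μ^2 + t^2) ^ (p/2) - ν/p * (μ^2 + T^2) ^ (p/2)) ^ ((q-p)/p)
            + 1 + ε / (μ^2 + T^2) ^ ((p-2)/2)) := by
  set M₁ : ℝ := 2 ^ ((q - p) / p) * (p / ν) ^ ((q - p) / p)
  set M₂ : ℝ := 2 ^ ((q - p) / p) * 2 ^ ((q - p) / 2)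
  have hM : 0 ≤ M₁ ∧ 0 ≤ M₂ := ⟨by positivity, by positivity⟩
  have hK : 1 ≤ Λ / ν := (one_le_div hν).mpr hνΛ
  refine ⟨Λ / ν * (M₁ + M₂ + 2), one_le_mul_of_one_le_of_one_le hK (by linarith), ?_⟩
  intro μ ε T hμ hμ1 hε hε1 hT hT1 t ht
  set A := μ ^ 2 + t ^ 2
  set B := μ ^ 2 + T ^ 2
  have hB : 0 < B := by positivity
  have hBA : B ≤ A := by nlinarith
  have hA : 0 < A := hB.trans_le hBA
  have hG : 0 ≤ ν / p * A ^ (p / 2) - ν / p * B ^ (p / 2) := sub_nonneg.mpr <|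
    mul_le_mul_of_nonneg_left (rpow_le_rpow hB.le hBA (by linarith)) (div_pos hν (by linarith)).le
  have hgrowth : A ^ ((q - p) / 2) ≤
      M₁ * (ν / p * A ^ (p / 2) - ν / p * B ^ (p / 2)) ^ ((q - p) / p) + M₂ :=
    rpow_sub_div_two_le_increment hν (by linarith) hpq hB hBA (by nlinarith)
  have hreg := rpow_min_div_rpow_le hB hBA (by nlinarith : A ≤ 1 + t ^ 2) (p - 2)
  have hεreg := mul_le_mul_of_nonneg_left hreg hε.le
  rw [ellipticity_ratio_eq hν hA, mul_assoc, div_eq_mul_inv ε]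
  gcongr
  have he := inv_nonneg.mpr (rpow_nonneg hB.le ((p - 2) / 2))
  have hg := rpow_nonneg hG ((q - p) / p)
  nlinarith [mul_nonneg hM.1 (mul_nonneg hε.le he), mul_nonneg hM.2 (mul_nonneg hε.le he),
    mul_nonneg hM.2 hg, mul_nonneg hε.le he]
end

section
/- Let $n\geq 3$ and $\Lambda\geq 1$, and let $v(x)=x_n^2+1-\Lambda|x'|^2$ on $\mathbb{R}^n=\mathbb{R}^{n-1}\times\mathbb{R}$. Then there exists a constant $C=C(n)<\infty$, independent of $\Lambda$, such that $\int_{B_1}(\max\{v,0\})^2\,dx \leq C\,\Lambda^{-(n-1)/2}$. Consequently, since $\sup_{B_{1/4}} v\geq v(0)=1$, the ratio $\|v_+\|_{L^\infty(B_{1/4})}/\|v_+\|_{L^2(B_1)}\geq c(n)\,\Lambda^{(n-1)/4}$ for some $c(n)>0$. -/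
open MeasureTheory Metric

/-!
On `B_1` we have `x_n² ≤ 1`, so `v ≤ 2 - Λ|x'|²`: hence `v_+ ≤ 2`, and `v_+` vanishes unless
every horizontal coordinate satisfies `|x_i| ≤ √(2/Λ)`. Therefore `∫_{B_1} v_+²` is at most
`4` times the volume of the box `[-√(2/Λ), √(2/Λ)]^(n-1) × [-1, 1]`, which is of order
`Λ^(-(n-1)/2)`, while `v_+(0) = 1`.
-/

theorem EuclideanSpace.volume_setOf_forall_mem_Icc {ι : Type*} [Fintype ι] (a b : ι → ℝ) :
    volume {x : EuclideanSpace ℝ ι | ∀ i, x i ∈ Set.Icc (a i) (b i)} =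
      ∏ i, ENNReal.ofReal (b i - a i) := by
  have : {x : EuclideanSpace ℝ ι | ∀ i, x i ∈ Set.Icc (a i) (b i)} =
      WithLp.ofLp ⁻¹' Set.Icc a b := by
    ext x; simp [Pi.le_def, forall_and]
  rw [this, (PiLp.volume_preserving_ofLp ι).measure_preimage measurableSet_Icc.nullMeasurableSet,
    Real.volume_Icc_pi]

theorem setIntegral_le_mul_measureReal_of_eqOn_diff {X : Type*} [MeasurableSpace X]
    {μ : Measure X} {s t : Set X} {f : X → ℝ} {M : ℝ} (hs : MeasurableSet s)
    (ht : MeasurableSet t) (htμ : μ t ≠ ⊤) (hM : 0 ≤ M) (hfM : ∀ x ∈ s, |f x| ≤ M)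
    (hf0 : Set.EqOn f 0 (s \ t)) : ∫ x in s, f x ∂μ ≤ M * μ.real t := by
  have hf : Set.EqOn f (t.indicator f) s := fun x hx => by
    by_cases hxt : x ∈ t
    · rw [Set.indicator_of_mem hxt]
    · rw [Set.indicator_of_notMem hxt, hf0 ⟨hx, hxt⟩, Pi.zero_apply]
  calc ∫ x in s, f x ∂μ = ∫ x in s ∩ t, f x ∂μ := by
        rw [setIntegral_congr_fun hs hf, setIntegral_indicator ht]
    _ ≤ ‖∫ x in s ∩ t, f x ∂μ‖ := Real.le_norm_self _
    _ ≤ M * μ.real (s ∩ t) :=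
        norm_setIntegral_le_of_norm_le_const
          ((measure_mono Set.inter_subset_right).trans_lt htμ.lt_top) fun x hx => hfM x hx.1
    _ ≤ M * μ.real t :=
        mul_le_mul_of_nonneg_left (measureReal_mono Set.inter_subset_right htμ) hM

theorem Real.sqrt_div_pow (a : ℝ) {Λ : ℝ} (hΛ : 0 < Λ) (m : ℕ) :
    √(a / Λ) ^ m = √a ^ m * Λ ^ (-(m : ℝ) / 2) := by
  rw [Real.sqrt_div' a hΛ.le, div_pow, div_eq_mul_inv, Real.sqrt_eq_rpow Λ,
    ← Real.rpow_natCast (Λ ^ _) m, ← Real.rpow_mul hΛ.le, ← Real.rpow_neg hΛ.le]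
  ring_nf

theorem rpow_mul_rpow_le_one_of_le {C Λ a I : ℝ} (hC : 0 < C) (hΛ : 0 < Λ) (hI : 0 ≤ I)
    (h : I ≤ C * Λ ^ (-a / 2)) : C ^ (-(1 : ℝ) / 2) * Λ ^ (a / 4) * I ^ ((1 : ℝ) / 2) ≤ 1 := by
  calc C ^ (-(1 : ℝ) / 2) * Λ ^ (a / 4) * I ^ ((1 : ℝ) / 2)
      ≤ C ^ (-(1 : ℝ) / 2) * Λ ^ (a / 4) * (C * Λ ^ (-a / 2)) ^ ((1 : ℝ) / 2) := by
        gcongr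
    _ = (C ^ (-(1 : ℝ) / 2) * C ^ ((1 : ℝ) / 2)) * (Λ ^ (a / 4) * Λ ^ (-a / 2 * (1 / 2))) := by
        rw [Real.mul_rpow hC.le (by positivity), ← Real.rpow_mul hΛ.le]; ring
    _ = 1 := by
        rw [← Real.rpow_add hC, ← Real.rpow_add hΛ]; ring_nf; simp

theorem EuclideanSpace.sq_apply_le_one {ι : Type*} [Fintype ι] {x : EuclideanSpace ℝ ι}
    (hx : ‖x‖ ≤ 1) (i : ι) : x i ^ 2 ≤ 1 := by
  rw [sq_le_one_iff_abs_le_one, ← Real.norm_eq_abs]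
  exact (PiLp.norm_apply_le x i).trans hx

/-- The function `v` of the statement, in dimension `n = m + 1`. -/
noncomputable def hyperboloidFn (m : ℕ) (Λ : ℝ) (x : EuclideanSpace ℝ (Fin (m + 1))) : ℝ :=
  x (Fin.last m) ^ 2 + 1 - Λ * ∑ i : Fin (m + 1), if (i : ℕ) < m then x i ^ 2 else 0

noncomputable def boxHalfWidth (m : ℕ) (Λ : ℝ) (i : Fin (m + 1)) : ℝ :=
  if (i : ℕ) < m then √(2 / Λ) else 1

def thinBox (m : ℕ) (Λ : ℝ) : Set (EuclideanSpace ℝ (Fin (m + 1))) :=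
  {x | ∀ i, x i ∈ Set.Icc (-boxHalfWidth m Λ i) (boxHalfWidth m Λ i)}

section

variable {m : ℕ} {Λ : ℝ}

theorem hyperboloidFn_le_two (hΛ : 0 ≤ Λ) {x : EuclideanSpace ℝ (Fin (m + 1))} (hx : ‖x‖ ≤ 1) :
    hyperboloidFn m Λ x ≤ 2 := by
  have hlast : x (Fin.last m) ^ 2 ≤ 1 := EuclideanSpace.sq_apply_le_one hx _
  have hsum : 0 ≤ Λ * ∑ i : Fin (m + 1), if (i : ℕ) < m then x i ^ 2 else 0 := by positivity
  rw [hyperboloidFn]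
  linarith

theorem hyperboloidFn_nonpos_of_notMem_thinBox (hΛ : 0 < Λ) {x : EuclideanSpace ℝ (Fin (m + 1))}
    (hx : ‖x‖ ≤ 1) (hxb : x ∉ thinBox m Λ) : hyperboloidFn m Λ x ≤ 0 := by
  obtain ⟨i, hi⟩ : ∃ i, boxHalfWidth m Λ i < |x i| := by
    simpa [thinBox, ← abs_le] using hxb
  have hxi : |x i| ≤ 1 := (PiLp.norm_apply_le x i).trans hx
  by_cases him : (i : ℕ) < m
  · rw [boxHalfWidth, if_pos him] at hi
    rw [Real.sqrt_lt' ((Real.sqrt_nonneg _).trans_lt hi), sq_abs, div_lt_iff₀' hΛ] at hi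
    have hsum : x i ^ 2 ≤ ∑ k : Fin (m + 1), if (k : ℕ) < m then x k ^ 2 else 0 := by
      simpa only [if_pos him] using Finset.single_le_sum
        (f := fun k : Fin (m + 1) => if (k : ℕ) < m then x k ^ 2 else 0)
        (fun k _ => by positivity) (Finset.mem_univ i)
    have hlast : x (Fin.last m) ^ 2 ≤ 1 := EuclideanSpace.sq_apply_le_one hx _
    rw [hyperboloidFn]
    nlinarith
  · rw [boxHalfWidth, if_neg him] at hi
    linarith

theorem measurableSet_thinBox (m : ℕ) (Λ : ℝ) : MeasurableSet (thinBox m Λ) := by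
  unfold thinBox
  measurability

theorem volume_thinBox_ne_top (m : ℕ) (Λ : ℝ) : volume (thinBox m Λ) ≠ ⊤ := by
  rw [thinBox, EuclideanSpace.volume_setOf_forall_mem_Icc]
  exact ENNReal.prod_ne_top fun _ _ => ENNReal.ofReal_ne_top

theorem measureReal_thinBox (m : ℕ) (Λ : ℝ) :
    volume.real (thinBox m Λ) = (2 * √(2 / Λ)) ^ m * 2 := by
  rw [measureReal_def, thinBox, EuclideanSpace.volume_setOf_forall_mem_Icc, ENNReal.toReal_prod,
    Fin.prod_univ_castSucc]
  simp only [boxHalfWidth, Fin.val_castSucc, Fin.is_lt, if_true, Fin.val_last, lt_irrefl,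
    if_false, sub_neg_eq_add, ← two_mul, Finset.prod_const, Finset.card_univ, Fintype.card_fin,
    ENNReal.toReal_ofReal (by positivity : (0 : ℝ) ≤ 2 * √(2 / Λ)),
    ENNReal.toReal_ofReal zero_le_two, mul_one]

theorem integral_ball_hyperboloidFn_posPart_sq_le (hΛ : 0 < Λ) :
    ∫ x in ball (0 : EuclideanSpace ℝ (Fin (m + 1))) 1, max (hyperboloidFn m Λ x) 0 ^ 2 ≤
      8 * (2 * √(2 / Λ)) ^ m := by
  calc ∫ x in ball (0 : EuclideanSpace ℝ (Fin (m + 1))) 1, max (hyperboloidFn m Λ x) 0 ^ 2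
      ≤ 4 * volume.real (thinBox m Λ) := by
        refine setIntegral_le_mul_measureReal_of_eqOn_diff measurableSet_ball
          (measurableSet_thinBox m Λ) (volume_thinBox_ne_top m Λ) (by norm_num)
          (fun x hx => ?_) fun x hx => ?_
        · have h2 := hyperboloidFn_le_two hΛ.le (mem_ball_zero_iff.1 hx).le
          rw [abs_of_nonneg (by positivity)]
          nlinarith [le_max_right (hyperboloidFn m Λ x) 0, max_le h2 zero_le_two]
        · simp [hyperboloidFn_nonpos_of_notMem_thinBox hΛ (mem_ball_zero_iff.1 hx.1).le hx.2]
    _ = 8 * (2 * √(2 / Λ)) ^ m := by rw [measureReal_thinBox]; ring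

theorem one_le_sSup_hyperboloidFn_posPart_image_ball (hΛ : 0 ≤ Λ) :
    1 ≤ sSup ((fun x => max (hyperboloidFn m Λ x) 0) ''
      ball (0 : EuclideanSpace ℝ (Fin (m + 1))) (1 / 4)) := by
  refine le_csSup ⟨2, ?_⟩ ⟨0, mem_ball_self (by norm_num), by simp [hyperboloidFn]⟩
  rintro _ ⟨x, hx, rfl⟩
  have hx1 : ‖x‖ ≤ 1 := by rw [mem_ball_zero_iff] at hx; linarith
  exact max_le (hyperboloidFn_le_two hΛ hx1) zero_le_two

end

/-- For `v(x) = x_n² + 1 - Λ|x'|²`, one has `∫_{B_1} (v_+)² ≤ C Λ^{-(n-1)/2}` and hence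
the `L^∞(B_{1/4})`–`L²(B_1)` ratio of `v_+` is at least `c Λ^{(n-1)/4}`. -/
theorem counterexample_L2_bound (n : ℕ) (hn : 3 ≤ n) :
    ∃ C c : ℝ, 0 < C ∧ 0 < c ∧ ∀ Λ : ℝ, 1 ≤ Λ →
      ∀ v : EuclideanSpace ℝ (Fin n) → ℝ,
      (∀ x : EuclideanSpace ℝ (Fin n), v x = x ⟨n - 1, by omega⟩ ^ 2 + 1 -
        Λ * ∑ i : Fin n, (if (i : ℕ) < n - 1 then x i ^ 2 else 0)) →
      (∫ x in ball (0 : EuclideanSpace ℝ (Fin n)) 1, max (v x) 0 ^ 2) ≤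
          C * Λ ^ (-((n:ℝ) - 1)/2) ∧
      c * Λ ^ (((n:ℝ) - 1)/4) *
          (∫ x in ball (0 : EuclideanSpace ℝ (Fin n)) 1, max (v x) 0 ^ 2) ^ ((1:ℝ)/2) ≤
        sSup ((fun x => max (v x) 0) '' ball (0 : EuclideanSpace ℝ (Fin n)) (1/4)) := by
  obtain ⟨m, rfl⟩ : ∃ m, n = m + 1 := ⟨n - 1, by omega⟩
  have hC : (0 : ℝ) < 8 * (2 * √2) ^ m := by positivity
  refine ⟨_, _, hC, Real.rpow_pos_of_pos hC (-(1 : ℝ) / 2), fun Λ hΛ v hv => ?_⟩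
  obtain rfl : v = hyperboloidFn m Λ := funext hv
  have hΛ0 : 0 < Λ := one_pos.trans_le hΛ
  have hL2 : ∫ x in ball (0 : EuclideanSpace ℝ (Fin (m + 1))) 1,
      max (hyperboloidFn m Λ x) 0 ^ 2 ≤
      8 * (2 * √2) ^ m * Λ ^ (-(((m + 1 : ℕ) : ℝ) - 1) / 2) := by
    convert integral_ball_hyperboloidFn_posPart_sq_le hΛ0 using 1
    rw [mul_pow 2 √(2 / Λ), Real.sqrt_div_pow 2 hΛ0]
    push_cast
    ring_nf
  exact ⟨hL2, (rpow_mul_rpow_le_one_of_le hC hΛ0 (by positivity) hL2).trans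
    (one_le_sSup_hyperboloidFn_posPart_image_ball hΛ0.le)⟩
end

section
/- Let $\tau\in(0,1/2)$, $\alpha>0$ satisfy $(2\tau)^{\beta}=2^{-\alpha}$ for some $\beta>0$, and let $(J_\ell)_{\ell\geq 0}$ be a sequence of non-negative reals. Suppose that constants $C_1,C_2,C_3>0$ and a sequence $(\Delta_\ell)_{\ell\geq 1}$ of positive reals satisfy: $\Delta_\ell \geq \Delta^{(1)}_\ell+\Delta^{(3)}_\ell$ with $\Delta^{(1)}_\ell=(2^\alpha 3C_1\tau^{-\beta-1})^{1/\beta}J_0 2^{-\ell}$ and $\Delta^{(3)}_\ell=(3C_3/\tau)^{1/\theta}\tau^{\ell-1}J_0$ for some $\theta>0$, and that the recursion $J_\ell\leq C_1 2^{(\ell+1)\alpha}(J_{\ell-1}/\Delta_\ell)^{\beta}J_{\ell-1}+\frac{1}{3}\tau^\ell J_0+C_3(J_{\ell-1}/\Delta_\ell)^{\theta}J_{\ell-1}$ holds for all $\ell\geq 1$. Then $J_\ell\leq \tau^\ell J_0$ for all $\ell\geq 0$. -/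
/-!
Once `J ℓ ≤ τ ^ ℓ * J 0`, the two lower bounds on `Δ (ℓ + 1)` are calibrated so that each
superlinear coefficient `C * (J ℓ / Δ (ℓ + 1)) ^ β` is at most `τ / 3`; together with the additive
term `τ ^ (ℓ + 1) * J 0 / 3` this gives `J (ℓ + 1) ≤ τ ^ (ℓ + 1) * J 0`. For the first coefficient
the calibration is an exact identity, which is where `(2 * τ) ^ β = 2 ^ (-α)` enters.
-/

theorem le_pow_mul_of_step {τ : ℝ} {J c : ℕ → ℝ} (hτ : 0 ≤ τ) (hJ : ∀ n, 0 ≤ J n)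
    (hc : ∀ n, J n ≤ τ ^ n * J 0 → c n ≤ 2 * τ / 3)
    (hstep : ∀ n, J (n + 1) ≤ c n * J n + τ ^ (n + 1) * J 0 / 3) :
    ∀ n, J n ≤ τ ^ n * J 0 := by
  intro n
  induction n with
  | zero => simp
  | succ n ih =>
    calc J (n + 1) ≤ c n * J n + τ ^ (n + 1) * J 0 / 3 := hstep n
      _ ≤ 2 * τ / 3 * (τ ^ n * J 0) + τ ^ (n + 1) * J 0 / 3 := by
        gcongr
        · exact hJ n
        · exact hc n ih
      _ = τ ^ (n + 1) * J 0 := by ring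

theorem mul_rpow_div_le_of_mul_le {K ε c θ x Δ : ℝ} (hε : 0 ≤ ε) (hc : 0 ≤ c) (hθ : 0 ≤ θ)
    (hx : 0 ≤ x) (hΔ : 0 < Δ) (hK : K ≤ ε * c ^ θ) (hcx : c * x ≤ Δ) :
    K * (x / Δ) ^ θ ≤ ε :=
  calc K * (x / Δ) ^ θ ≤ ε * c ^ θ * (x / Δ) ^ θ := by gcongr
    _ = ε * (c * x / Δ) ^ θ := by
      rw [mul_assoc, ← Real.mul_rpow hc (by positivity), mul_div_assoc]
    _ ≤ ε * 1 ^ θ := by gcongr; exact (div_le_one hΔ).mpr hcx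
    _ = ε := by rw [Real.one_rpow, mul_one]

theorem two_rpow_neg_div_pow_rpow {τ α β : ℝ} (hτ : 0 < τ) (hrel : (2 * τ) ^ β = 2 ^ (-α))
    (n : ℕ) : (2 ^ (-((n : ℝ) + 1)) / τ ^ n) ^ β = 2 ^ (((n : ℝ) + 1) * α) * τ ^ β := by
  have hlog : β * (Real.log 2 + Real.log τ) = -α * Real.log 2 := by
    simpa [Real.log_rpow, Real.log_mul, hτ, hτ.ne'] using congrArg Real.log hrel
  refine Real.log_injOn_pos (Set.mem_Ioi.mpr (by positivity)) (Set.mem_Ioi.mpr (by positivity)) ?_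
  rw [Real.log_rpow (by positivity), Real.log_div (by positivity) (by positivity),
    Real.log_mul (by positivity) (by positivity), Real.log_rpow two_pos, Real.log_rpow two_pos,
    Real.log_rpow hτ, Real.log_pow]
  linear_combination (-(n : ℝ) - 1) * hlog

theorem div_three_mul_rpow_eq_mul_two_rpow {τ α β C : ℝ} (hτ : 0 < τ) (hC : 0 ≤ C)
    (hβ : β ≠ 0) (hrel : (2 * τ) ^ β = 2 ^ (-α)) (n : ℕ) :
    τ / 3 * ((2 ^ α * 3 * C * τ ^ (-β - 1)) ^ (1 / β) * 2 ^ (-((n : ℝ) + 1)) / τ ^ n) ^ β =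
      C * 2 ^ (((n : ℝ) + 2) * α) := by
  rw [mul_div_assoc, Real.mul_rpow (by positivity) (by positivity), one_div,
    Real.rpow_inv_rpow (by positivity) hβ, two_rpow_neg_div_pow_rpow hτ hrel]
  have h2 : (2 : ℝ) ^ α * 2 ^ (((n : ℝ) + 1) * α) = 2 ^ (((n : ℝ) + 2) * α) := by
    rw [← Real.rpow_add two_pos]; ring_nf
  have hτ' : τ ^ (-β - 1) * τ ^ β * τ = 1 := by
    rw [← Real.rpow_add hτ, ← Real.rpow_add_one hτ.ne', show -β - 1 + β + 1 = 0 by ring,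
      Real.rpow_zero]
  linear_combination C * τ ^ (-β - 1) * τ ^ β * τ * h2 + C * 2 ^ (((n : ℝ) + 2) * α) * hτ'

theorem geometric_decay_induction_general (τ α β θ : ℝ)
    (hτ0 : 0 < τ) (hβ : 0 < β) (hθ : 0 < θ)
    (hrel : (2*τ) ^ β = 2 ^ (-α))
    (J : ℕ → ℝ) (hJ : ∀ ℓ, 0 ≤ J ℓ)
    (C1 C3 : ℝ) (hC1 : 0 < C1) (hC3 : 0 < C3)
    (Δ : ℕ → ℝ) (hΔpos : ∀ ℓ, 0 < Δ ℓ)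
    (hΔ : ∀ ℓ : ℕ,
      (2 ^ α * 3 * C1 * τ ^ (-β - 1)) ^ (1/β) * J 0 * 2 ^ (-((ℓ:ℝ) + 1)) +
        (3 * C3 / τ) ^ (1/θ) * τ ^ ℓ * J 0 ≤ Δ (ℓ + 1))
    (hrec : ∀ ℓ : ℕ,
      J (ℓ + 1) ≤ C1 * 2 ^ (((ℓ:ℝ) + 2) * α) * (J ℓ / Δ (ℓ + 1)) ^ β * J ℓ +
        (1/3) * τ ^ (ℓ + 1) * J 0 + C3 * (J ℓ / Δ (ℓ + 1)) ^ θ * J ℓ) :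
    ∀ ℓ : ℕ, J ℓ ≤ τ ^ ℓ * J 0 := by
  set A := (2 ^ α * 3 * C1 * τ ^ (-β - 1)) ^ (1/β)
  set B := (3 * C3 / τ) ^ (1/θ) with hB
  refine le_pow_mul_of_step (c := fun n ↦ C1 * 2 ^ (((n:ℝ) + 2) * α) * (J n / Δ (n + 1)) ^ β +
    C3 * (J n / Δ (n + 1)) ^ θ) hτ0.le hJ (fun n hn ↦ ?_) (fun n ↦ by linear_combination hrec n)
  have hJ0 := hJ 0
  have hΔ₁ : A * J 0 * 2 ^ (-((n:ℝ) + 1)) ≤ Δ (n + 1) :=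
    (le_add_of_nonneg_right (by positivity)).trans (hΔ n)
  have hΔ₃ : B * τ ^ n * J 0 ≤ Δ (n + 1) :=
    (le_add_of_nonneg_left (by positivity)).trans (hΔ n)
  have h₁ : C1 * 2 ^ (((n:ℝ) + 2) * α) * (J n / Δ (n + 1)) ^ β ≤ τ / 3 := by
    refine mul_rpow_div_le_of_mul_le (by positivity) (by positivity) hβ.le (hJ n) (hΔpos _)
      (div_three_mul_rpow_eq_mul_two_rpow hτ0 hC1.le hβ.ne' hrel n).ge ?_
    calc A * 2 ^ (-((n:ℝ) + 1)) / τ ^ n * J n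
        ≤ A * 2 ^ (-((n:ℝ) + 1)) / τ ^ n * (τ ^ n * J 0) := by gcongr
      _ = A * J 0 * 2 ^ (-((n:ℝ) + 1)) := by field_simp
      _ ≤ Δ (n + 1) := hΔ₁
  have h₃ : C3 * (J n / Δ (n + 1)) ^ θ ≤ τ / 3 := by
    refine mul_rpow_div_le_of_mul_le (c := B) (by positivity) (by positivity) hθ.le (hJ n)
      (hΔpos _) (le_of_eq ?_) ?_
    · rw [hB, one_div, Real.rpow_inv_rpow (by positivity) hθ.ne']; field_simp
    · calc B * J n ≤ B * (τ ^ n * J 0) := by gcongr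
        _ ≤ Δ (n + 1) := by rw [← mul_assoc]; exact hΔ₃
  linarith

/-- Abstract geometric-decay induction of the De Giorgi-type iteration: the one-step
recursive inequality with the specified level increments `Δ_ℓ` forces `J_ℓ ≤ τ^ℓ J_0`. -/
theorem geometric_decay_induction (τ α β θ : ℝ)
    (hτ0 : 0 < τ) (hτ1 : τ < 1/2) (hα : 0 < α) (hβ : 0 < β) (hθ : 0 < θ)
    (hrel : (2*τ) ^ β = 2 ^ (-α))
    (J : ℕ → ℝ) (hJ : ∀ ℓ, 0 ≤ J ℓ)
    (C1 C2 C3 : ℝ) (hC1 : 0 < C1) (hC2 : 0 < C2) (hC3 : 0 < C3)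
    (Δ : ℕ → ℝ) (hΔpos : ∀ ℓ, 0 < Δ ℓ)
    (hΔ : ∀ ℓ : ℕ,
      (2 ^ α * 3 * C1 * τ ^ (-β - 1)) ^ (1/β) * J 0 * 2 ^ (-((ℓ:ℝ) + 1)) +
        (3 * C3 / τ) ^ (1/θ) * τ ^ ℓ * J 0 ≤ Δ (ℓ + 1))
    (hrec : ∀ ℓ : ℕ,
      J (ℓ + 1) ≤ C1 * 2 ^ (((ℓ:ℝ) + 2) * α) * (J ℓ / Δ (ℓ + 1)) ^ β * J ℓ +
        (1/3) * τ ^ (ℓ + 1) * J 0 + C3 * (J ℓ / Δ (ℓ + 1)) ^ θ * J ℓ) :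
    ∀ ℓ : ℕ, J ℓ ≤ τ ^ ℓ * J 0 :=
  geometric_decay_induction_general τ α β θ hτ0 hβ hθ hrel J hJ C1 C3 hC1 hC3 Δ hΔpos hΔ hrec
end
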